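/- arXiv:1304.1338 — 5 statements merged into one kernel-verified Lean document; each statement's English description precedes it below -/
import Mathlib

section
/- Let N = {n ∈ R* : n⁻¹ K* n = K*} be the normalizer of K* in R* where R = K(ε;σ). If σ = id then N = R*, and if σ ≠ id then N = K*. -/
@[ext]
structure TDN (K : Type*) [Field K] (σ : K →+* K) where
  a : K
  b : K

namespace TDN

variable {K : Type*} [Field K] {σ : K →+* K}

instance : Add (TDN K σ) := ⟨fun x y => ⟨x.a + y.a, x.b + y.b⟩⟩
instance : Mul (TDN K σ) := ⟨fun x y => ⟨x.a * y.a, x.a * y.b + x.b * σ y.a⟩⟩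
instance : Neg (TDN K σ) := ⟨fun x => ⟨-x.a, -x.b⟩⟩
instance : Zero (TDN K σ) := ⟨⟨0, 0⟩⟩
instance : One (TDN K σ) := ⟨⟨1, 0⟩⟩

@[simp] lemma add_a (x y : TDN K σ) : (x + y).a = x.a + y.a := rfl
@[simp] lemma add_b (x y : TDN K σ) : (x + y).b = x.b + y.b := rfl
@[simp] lemma mul_a (x y : TDN K σ) : (x * y).a = x.a * y.a := rfl
@[simp] lemma mul_b (x y : TDN K σ) : (x * y).b = x.a * y.b + x.b * σ y.a := rfl
@[simp] lemma neg_a (x : TDN K σ) : (-x).a = -x.a := rfl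
@[simp] lemma neg_b (x : TDN K σ) : (-x).b = -x.b := rfl
@[simp] lemma zero_a : (0 : TDN K σ).a = 0 := rfl
@[simp] lemma zero_b : (0 : TDN K σ).b = 0 := rfl
@[simp] lemma one_a : (1 : TDN K σ).a = 1 := rfl
@[simp] lemma one_b : (1 : TDN K σ).b = 0 := rfl

instance instRing : Ring (TDN K σ) where
  add := (· + ·)
  mul := (· * ·)
  zero := 0
  one := 1
  neg := Neg.neg
  add_assoc x y z := by ext <;> simp <;> ring
  zero_add x := by ext <;> simp
  add_zero x := by ext <;> simp
  add_comm x y := by ext <;> simp <;> ring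
  mul_assoc x y z := by ext <;> simp [map_mul] <;> ring
  one_mul x := by ext <;> simp
  mul_one x := by ext <;> simp
  left_distrib x y z := by ext <;> simp [map_add] <;> ring
  right_distrib x y z := by ext <;> simp [map_add] <;> ring
  zero_mul x := by ext <;> simp
  mul_zero x := by ext <;> simp
  neg_add_cancel x := by ext <;> simp
  nsmul := nsmulRec
  zsmul := zsmulRec

def eps : TDN K σ := ⟨0, 1⟩

end TDN

/-! Conjugation by a unit `n` preserves the `a`-component, since `a` is multiplicative and `K` is
commutative. Hence `n⁻¹ c n` lies in `K*` only if it equals `c`, i.e. only if `n` commutes with `c`.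
For `n = a + bε` and `c ∈ K` one has `c n - n c = b (c - σ c) ε`, so `n` normalizes `K*` iff
`b (c - σ c) = 0` for every `c`: always when `σ = id`, and iff `b = 0` otherwise. -/

namespace TDN

variable {K : Type*} [Field K] {σ : K →+* K}

def inl : K →+* TDN K σ where
  toFun c := ⟨c, 0⟩
  map_one' := rfl
  map_mul' c d := by ext <;> simp
  map_zero' := rfl
  map_add' c d := by ext <;> simp

lemma inl_b (c : K) : (inl c : TDN K σ).b = 0 := rfl

def unitsK : Set (TDN K σ)ˣ := {u | (u : TDN K σ).b = 0}

lemma mul_comm_iff_of_b_eq_zero {k : TDN K σ} (hk : k.b = 0) (x : TDN K σ) :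
    k * x = x * k ↔ x.b * (k.a - σ k.a) = 0 := by
  rw [TDN.ext_iff, mul_a, mul_a, mul_b, mul_b, hk, mul_sub, sub_eq_zero]
  simp only [mul_comm k.a x.a, mul_comm k.a x.b, mul_zero, zero_mul, add_zero, zero_add,
    true_and]

lemma units_conj_a (n k : (TDN K σ)ˣ) :
    ((n⁻¹ * k * n : (TDN K σ)ˣ) : TDN K σ).a = (k : TDN K σ).a := by
  rw [Units.val_mul, Units.val_mul, mul_a, mul_a, mul_right_comm, ← mul_a, ← Units.val_mul,
    inv_mul_cancel, Units.val_one, one_a, one_mul]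

lemma units_conj_mem_unitsK_iff {n k : (TDN K σ)ˣ} (hk : k ∈ unitsK) :
    n⁻¹ * k * n ∈ unitsK ↔ (k : TDN K σ) * n = n * k := by
  constructor
  · intro h
    have hfix : n⁻¹ * k * n = k := Units.ext (TDN.ext (units_conj_a n k) (h.trans hk.symm))
    rw [← Units.val_mul, ← Units.val_mul]
    congr 1
    calc k * n = n * (n⁻¹ * k * n) := by group
      _ = n * k := by rw [hfix]
  · intro h
    change ((n⁻¹ * k * n : (TDN K σ)ˣ) : TDN K σ).b = 0
    rw [Units.val_mul, Units.val_mul, mul_assoc, h, ← mul_assoc, ← Units.val_mul,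
      inv_mul_cancel, Units.val_one, one_mul, hk]

theorem image_units_conj_unitsK_eq_iff (n : (TDN K σ)ˣ) :
    (fun k => n⁻¹ * k * n) '' unitsK = unitsK ↔ ∀ c : K, (n : TDN K σ).b * (c - σ c) = 0 := by
  constructor
  · intro h c
    rcases eq_or_ne c 0 with rfl | hc
    · simp
    set k : (TDN K σ)ˣ := Units.map (inl : K →+* TDN K σ).toMonoidHom (Units.mk0 c hc)
    have hk : k ∈ unitsK := inl_b c
    have hconj : n⁻¹ * k * n ∈ unitsK := h.subset (Set.mem_image_of_mem _ hk)
    exact (mul_comm_iff_of_b_eq_zero hk n).1 ((units_conj_mem_unitsK_iff hk).1 hconj)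
  · intro h
    have hfix : ∀ k ∈ unitsK, n⁻¹ * k * n = k := by
      intro k hk
      have hcomm := (mul_comm_iff_of_b_eq_zero hk n).2 (h _)
      rw [mul_assoc, inv_mul_eq_iff_eq_mul, Units.ext_iff, Units.val_mul, Units.val_mul, hcomm]
    rw [Set.image_congr hfix, Set.image_id']

end TDN

theorem normalizer_of_Kstar_general {K : Type*} [Field K] (σ : K →+* K)
    (Kset N : Set (TDN K σ)ˣ)
    (hK : Kset = {u : (TDN K σ)ˣ | (u : TDN K σ).b = 0})
    (hN : N = {n : (TDN K σ)ˣ | (fun k => n⁻¹ * k * n) '' Kset = Kset}) :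
    (σ = RingHom.id K → N = Set.univ) ∧ (σ ≠ RingHom.id K → N = Kset) := by
  obtain rfl : Kset = TDN.unitsK := hK
  simp only [TDN.image_units_conj_unitsK_eq_iff] at hN
  subst hN
  constructor
  · rintro rfl
    ext n
    simp
  · intro hσ
    obtain ⟨c, hc⟩ : ∃ c, σ c ≠ c := by
      contrapose! hσ
      exact RingHom.ext hσ
    have hc' : c - σ c ≠ 0 := sub_ne_zero.2 hc.symm
    ext n
    exact ⟨fun h => (mul_eq_zero.1 (h c)).resolve_right hc',
      fun (h : (n : TDN K σ).b = 0) d => by rw [h, zero_mul]⟩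

/-- Let `N = {n ∈ R* : n⁻¹ K* n = K*}` be the normalizer of `K*` in `R*`,
where `R = K(ε;σ)` and `K* = {a + 0ε : a ≠ 0}` is embedded in `R*`. If `σ = id` then
`N = R*`, and if `σ ≠ id` then `N = K*`. -/
theorem normalizer_of_Kstar {K : Type*} [Field K] (σ : K →+* K) (hσ : Function.Injective σ)
    (Kset N : Set (TDN K σ)ˣ)
    (hK : Kset = {u : (TDN K σ)ˣ | (u : TDN K σ).b = 0})
    (hN : N = {n : (TDN K σ)ˣ | (fun k => n⁻¹ * k * n) '' Kset = Kset}) :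
    (σ = RingHom.id K → N = Set.univ) ∧ (σ ≠ RingHom.id K → N = Kset) :=
  normalizer_of_Kstar_general σ Kset N hK hN
end

section
/- On the projective line P(R) over a local ring R, the relation R(a,b) ∥ R(c,d) ⟺ the matrix with rows (a,b),(c,d) is not invertible, is an equivalence relation, and each equivalence class has exactly |I| elements, where I is the maximal ideal of R. -/
section ProjectiveLine

variable (R : Type*) [Ring R]

/-- `(a,b)` is an admissible representative: it is the first row of an invertible
`2×2` matrix over `R`. -/
def IsRep (p : R × R) : Prop :=
  ∃ c d : R, IsUnit (!![p.1, p.2; c, d] : Matrix (Fin 2) (Fin 2) R)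

/-- The projective line over `R`: the cyclic submodules `R(a,b)` of `R²` with `(a,b)`
the first row of an invertible matrix. -/
def ProjLine : Set (Submodule R (R × R)) :=
  {P | ∃ p : R × R, IsRep R p ∧ P = Submodule.span R {p}}

/-- Parallelism: `R(a,b) ∥ R(c,d)` iff the matrix with rows `(a,b)`, `(c,d)` is not
invertible. -/
def Par (P Q : Submodule R (R × R)) : Prop :=
  ∃ p q : R × R, IsRep R p ∧ IsRep R q ∧
    P = Submodule.span R {p} ∧ Q = Submodule.span R {q} ∧
    ¬ IsUnit (!![p.1, p.2; q.1, q.2] : Matrix (Fin 2) (Fin 2) R)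

end ProjectiveLine

/-!
The non-units of a local ring form a two-sided ideal `𝔪` (a local ring is Dedekind-finite, so a
one-sided unit is a unit). If `(p; r)` is invertible, every row is uniquely `a • p + b • r`, and
`(p; q)` is singular exactly when `b ∈ 𝔪`; for a representative `q` this forces `a` to be a unit,
i.e. `q ≡ a • p` modulo `𝔪 × 𝔪`, a relation that is visibly an equivalence. Normalising `a = 1`,
the lines parallel to `R p` are exactly the `R (p + i • r)` with `i ∈ 𝔪`, and distinct `i` give
distinct lines.
-/

namespace IsLocalRing

variable {R : Type*} [Ring R] [IsLocalRing R]

-- `b * a` is idempotent, so it or `1 - b * a` is a unit and hence equal to `1`; in the second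
-- case `b * a = 0`, which forces `1 = (a * b) * (a * b) = 0`.
instance isDedekindFiniteMonoid : IsDedekindFiniteMonoid R where
  mul_eq_one_symm {a b} hab := by
    have hidem : IsIdempotentElem (b * a) := by
      rw [IsIdempotentElem, mul_assoc, ← mul_assoc a, hab, one_mul]
    rcases isUnit_or_isUnit_of_add_one (add_sub_cancel (b * a) 1) with h | h
    · exact (IsIdempotentElem.iff_eq_one_of_isUnit h).1 hidem
    · have hba : b * a = 0 := by
        simpa using (IsIdempotentElem.iff_eq_one_of_isUnit h).1 hidem.one_sub
      have : (1 : R) = 0 := by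
        rw [← hab, ← one_mul (a * b), ← hab, mul_assoc, ← mul_assoc b, hba]; simp
      exact absurd this one_ne_zero

variable (R) in
def nonunitsIdeal : TwoSidedIdeal R :=
  .mk' (nonunits R) (by simp) nonunits_add (fun h h' ↦ h (by simpa using h'.neg))
    (fun h h' ↦ h (isUnit_of_mul_isUnit_right h')) (fun h h' ↦ h (isUnit_of_mul_isUnit_left h'))

@[simp]
lemma mem_nonunitsIdeal {x : R} : x ∈ nonunitsIdeal R ↔ ¬IsUnit x :=
  TwoSidedIdeal.mem_mk' ..

end IsLocalRing

namespace TwoSidedIdeal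

variable {R : Type*} [Ring R] (I : TwoSidedIdeal R)

def pairs : Submodule R (R × R) := Submodule.prod I.asIdeal I.asIdeal

variable {I}

@[simp]
lemma mem_pairs {x : R × R} : x ∈ I.pairs ↔ x.1 ∈ I ∧ x.2 ∈ I := by
  simp [pairs, mem_asIdeal]

lemma smul_mem_pairs {c : R} (hc : c ∈ I) (x : R × R) : c • x ∈ I.pairs :=
  mem_pairs.2 ⟨I.mul_mem_right _ _ hc, I.mul_mem_right _ _ hc⟩

end TwoSidedIdeal

section Rows

variable {R : Type*}

abbrev rowMatrix (p q : R × R) : Matrix (Fin 2) (Fin 2) R := !![p.1, p.2; q.1, q.2]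

lemma rowMatrix_inj {p q p' q' : R × R} :
    rowMatrix p q = rowMatrix p' q' ↔ p = p' ∧ q = q' := by
  simp [Prod.ext_iff, and_and_and_comm]

variable [Ring R]

lemma mul_rowMatrix (A : Matrix (Fin 2) (Fin 2) R) (p r : R × R) :
    A * rowMatrix p r = rowMatrix (A 0 0 • p + A 0 1 • r) (A 1 0 • p + A 1 1 • r) := by
  ext i j
  fin_cases i <;> fin_cases j <;> simp [Matrix.mul_apply, Fin.sum_univ_two]

lemma isUnit_upper_unitriangular (i : R) : IsUnit !![1, i; 0, 1] :=
  ⟨⟨!![1, i; 0, 1], !![1, -i; 0, 1], by simp [Matrix.one_fin_two],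
    by simp [Matrix.one_fin_two]⟩, rfl⟩

lemma isUnit_lower_triangular (a : R) (b : Rˣ) : IsUnit !![1, 0; a, (b : R)] :=
  ⟨⟨!![1, 0; a, (b : R)], !![1, 0; -(↑b⁻¹ * a), ↑b⁻¹], by simp [Matrix.one_fin_two],
    by simp [Matrix.one_fin_two]⟩, rfl⟩

variable {p r : R × R}

lemma mem_of_smul_add_smul_mem_pairs (hr : IsUnit (rowMatrix p r)) {I : TwoSidedIdeal R}
    {x y : R} (h : x • p + y • r ∈ I.pairs) : x ∈ I ∧ y ∈ I := by
  obtain ⟨N, hN⟩ := hr.exists_right_inv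
  have key : !![x, y; 0, 0] = rowMatrix (x • p + y • r) 0 * N := by
    calc !![x, y; 0, 0] = !![x, y; 0, 0] * (rowMatrix p r * N) := by rw [hN, mul_one]
      _ = rowMatrix (x • p + y • r) 0 * N := by rw [← mul_assoc, mul_rowMatrix]; simp
  rw [TwoSidedIdeal.mem_pairs] at h
  have entry (j : Fin 2) : !![x, y; 0, 0] 0 j ∈ I := by
    rw [key]
    simpa [Matrix.mul_apply, Fin.sum_univ_two] using
      I.add_mem (I.mul_mem_right _ (N 0 j) h.1) (I.mul_mem_right _ (N 1 j) h.2)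
  exact ⟨by simpa using entry 0, by simpa using entry 1⟩

lemma exists_eq_smul_add_smul (hr : IsUnit (rowMatrix p r)) (q : R × R) :
    ∃ a b : R, q = a • p + b • r := by
  obtain ⟨N, hN⟩ := hr.exists_left_inv
  set A := rowMatrix q 0 * N
  have key : rowMatrix q 0 = A * rowMatrix p r := by rw [mul_assoc, hN, mul_one]
  rw [mul_rowMatrix, rowMatrix_inj] at key
  exact ⟨_, _, key.1⟩

lemma isRep_add_smul (hr : IsUnit (rowMatrix p r)) (i : R) : IsRep R (p + i • r) := by
  refine ⟨r.1, r.2, ?_⟩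
  simpa [mul_rowMatrix] using (isUnit_upper_unitriangular i).mul hr

lemma span_add_smul_injective (hr : IsUnit (rowMatrix p r)) :
    Function.Injective fun i : R ↦ Submodule.span R {p + i • r} := by
  intro i j (hij : Submodule.span R {p + i • r} = Submodule.span R {p + j • r})
  obtain ⟨x, hx⟩ := Submodule.mem_span_singleton.1 (hij ▸ Submodule.mem_span_singleton_self _)
  have hzero : (x - 1) • p + (x * j - i) • r ∈ (⊥ : TwoSidedIdeal R).pairs := by
    have : (x - 1) • p + (x * j - i) • r = x • (p + j • r) - (p + i • r) := by
      rw [smul_add, smul_smul, sub_smul, sub_smul, one_smul]; abel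
    rw [this, hx, sub_self]
    exact zero_mem _
  obtain ⟨hx1, hxij⟩ := mem_of_smul_add_smul_mem_pairs hr hzero
  rw [TwoSidedIdeal.mem_bot, sub_eq_zero] at hx1 hxij
  rw [hx1, one_mul] at hxij
  exact hxij.symm

end Rows

section LocalRing

open IsLocalRing

variable {R : Type*} [Ring R] [IsLocalRing R]

def ParallelRows (p q : R × R) : Prop :=
  ∃ u : Rˣ, q - (u : R) • p ∈ (nonunitsIdeal R).pairs

lemma ParallelRows.refl (p : R × R) : ParallelRows p p :=
  ⟨1, by simp⟩

lemma ParallelRows.symm {p q : R × R} (h : ParallelRows p q) : ParallelRows q p := by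
  obtain ⟨u, hu⟩ := h
  refine ⟨u⁻¹, ?_⟩
  have : p - (↑u⁻¹ : R) • q = -((↑u⁻¹ : R) • (q - (u : R) • p)) := by
    rw [smul_sub, smul_smul, Units.inv_mul, one_smul, neg_sub]
  rw [this]
  exact neg_mem (Submodule.smul_mem _ _ hu)

lemma ParallelRows.trans {p q s : R × R} (hpq : ParallelRows p q) (hqs : ParallelRows q s) :
    ParallelRows p s := by
  obtain ⟨u, hu⟩ := hpq
  obtain ⟨v, hv⟩ := hqs
  refine ⟨v * u, ?_⟩
  have : s - (↑(v * u) : R) • p = (s - (v : R) • q) + (v : R) • (q - (u : R) • p) := by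
    rw [Units.val_mul, smul_sub, smul_smul]; abel
  rw [this]
  exact add_mem hv (Submodule.smul_mem _ _ hu)

lemma IsRep.notMem_pairs {q : R × R} (hq : IsRep R q) : q ∉ (nonunitsIdeal R).pairs := by
  obtain ⟨c, d, hqs⟩ := hq
  intro h
  have := (mem_of_smul_add_smul_mem_pairs (p := q) (r := (c, d)) hqs
    (I := nonunitsIdeal R) (x := 1) (y := 0) (by rwa [one_smul, zero_smul, add_zero])).1
  simp at this

lemma parallelRows_of_mem_span {p q : R × R} (hq : IsRep R q) (h : q ∈ Submodule.span R {p}) :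
    ParallelRows p q := by
  obtain ⟨x, rfl⟩ := Submodule.mem_span_singleton.1 h
  have hx : IsUnit x := by
    by_contra hx
    exact hq.notMem_pairs (TwoSidedIdeal.smul_mem_pairs (by simpa using hx) p)
  exact ⟨hx.unit, by simp⟩

lemma not_isUnit_rowMatrix_of_parallelRows {p q : R × R} (h : ParallelRows p q) :
    ¬IsUnit (rowMatrix p q) := by
  obtain ⟨u, hu⟩ := h
  intro hpq
  have := (mem_of_smul_add_smul_mem_pairs hpq (x := -(u : R)) (y := 1) (by
    convert hu using 1; rw [neg_smul, one_smul]; abel)).2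
  simp at this

lemma exists_eq_smul_add_smul_of_not_isUnit {p q r : R × R} (hr : IsUnit (rowMatrix p r))
    (hq : IsRep R q) (hpq : ¬IsUnit (rowMatrix p q)) :
    ∃ a : Rˣ, ∃ b : R, ¬IsUnit b ∧ q = (a : R) • (p + b • r) := by
  obtain ⟨a, b, rfl⟩ := exists_eq_smul_add_smul hr q
  have hb : ¬IsUnit b := fun hb ↦ hpq <| by
    simpa [mul_rowMatrix, rowMatrix] using (isUnit_lower_triangular a hb.unit).mul hr
  have ha : IsUnit a := by
    by_contra ha
    exact hq.notMem_pairs (add_mem (TwoSidedIdeal.smul_mem_pairs (by simpa using ha) p)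
      (TwoSidedIdeal.smul_mem_pairs (by simpa using hb) r))
  refine ⟨ha.unit, ↑ha.unit⁻¹ * b, fun h ↦ hb (isUnit_of_mul_isUnit_right h), ?_⟩
  rw [smul_add, smul_smul, Units.mul_inv_cancel_left, IsUnit.unit_spec]

lemma parallelRows_iff {p q : R × R} (hp : IsRep R p) (hq : IsRep R q) :
    ParallelRows p q ↔ ¬IsUnit (rowMatrix p q) := by
  refine ⟨not_isUnit_rowMatrix_of_parallelRows, fun hpq ↦ ?_⟩
  obtain ⟨c, d, hr⟩ := hp
  obtain ⟨a, b, hb, rfl⟩ := exists_eq_smul_add_smul_of_not_isUnit (r := (c, d)) hr hq hpq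
  refine ⟨a, ?_⟩
  rw [smul_add, add_sub_cancel_left]
  exact Submodule.smul_mem _ _ (TwoSidedIdeal.smul_mem_pairs (by simpa using hb) _)

lemma par_span_iff {p : R × R} (hp : IsRep R p) {Q : Submodule R (R × R)} :
    Par R (Submodule.span R {p}) Q ↔
      ∃ q, IsRep R q ∧ Q = Submodule.span R {q} ∧ ParallelRows p q := by
  constructor
  · rintro ⟨p', q, hp', hq, hpp', rfl, hpq⟩
    have hp_p' : ParallelRows p p' :=
      parallelRows_of_mem_span hp' (hpp' ▸ Submodule.mem_span_singleton_self p')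
    exact ⟨q, hq, rfl, hp_p'.trans ((parallelRows_iff hp' hq).2 hpq)⟩
  · rintro ⟨q, hq, rfl, hpq⟩
    exact ⟨p, q, hp, hq, rfl, rfl, (parallelRows_iff hp hq).1 hpq⟩

lemma parallelRows_add_smul {p r : R × R} {i : R} (hi : ¬IsUnit i) :
    ParallelRows p (p + i • r) :=
  ⟨1, by simpa using TwoSidedIdeal.smul_mem_pairs (I := nonunitsIdeal R) (by simpa using hi) r⟩

lemma exists_eq_span_add_smul_of_par {p r : R × R} (hr : IsUnit (rowMatrix p r))
    {Q : Submodule R (R × R)} (hQ : Par R (Submodule.span R {p}) Q) :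
    ∃ i : R, ¬IsUnit i ∧ Q = Submodule.span R {p + i • r} := by
  have hp : IsRep R p := ⟨r.1, r.2, hr⟩
  obtain ⟨q, hq, rfl, hpq⟩ := (par_span_iff hp).1 hQ
  obtain ⟨a, b, hb, rfl⟩ :=
    exists_eq_smul_add_smul_of_not_isUnit hr hq ((parallelRows_iff hp hq).1 hpq)
  exact ⟨b, hb, Submodule.span_singleton_smul_eq a.isUnit _⟩

lemma card_par_class {p r : R × R} (hr : IsUnit (rowMatrix p r)) :
    Nat.card {Q : ProjLine R // Par R (Submodule.span R {p}) (Q : Submodule R (R × R))} =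
      Nat.card {i : R // ¬IsUnit i} := by
  have hp : IsRep R p := ⟨r.1, r.2, hr⟩
  let f (i : {i : R // ¬IsUnit i}) :
      {Q : ProjLine R // Par R (Submodule.span R {p}) (Q : Submodule R (R × R))} :=
    ⟨⟨_, p + (i : R) • r, isRep_add_smul hr i, rfl⟩,
      (par_span_iff hp).2 ⟨_, isRep_add_smul hr i, rfl, parallelRows_add_smul i.2⟩⟩
  have hf : Function.Bijective f := by
    refine ⟨fun i j hij ↦ Subtype.ext (span_add_smul_injective hr congr($hij.1.1)), ?_⟩
    rintro ⟨⟨Q, -⟩, hQ⟩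
    obtain ⟨i, hi, rfl⟩ := exists_eq_span_add_smul_of_par hr hQ
    exact ⟨⟨i, hi⟩, rfl⟩
  exact (Nat.card_congr (Equiv.ofBijective f hf)).symm

end LocalRing

theorem par_equivalence_and_class_size_general {R : Type*} [Ring R] [IsLocalRing R] :
    (∀ P ∈ ProjLine R, Par R P P) ∧
    (∀ P Q, Par R P Q → Par R Q P) ∧
    (∀ P Q S, Par R P Q → Par R Q S → Par R P S) ∧
    (∀ P ∈ ProjLine R,
      Nat.card {Q : ProjLine R // Par R P (Q : Submodule R (R × R))}
        = Nat.card {x : R // ¬ IsUnit x}) := by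
  refine ⟨?_, ?_, ?_, ?_⟩
  · rintro P ⟨p, hp, rfl⟩
    exact (par_span_iff hp).2 ⟨p, hp, rfl, .refl p⟩
  · rintro P Q ⟨p, q, hp, hq, rfl, rfl, hpq⟩
    exact (par_span_iff hq).2 ⟨p, hp, rfl, ((parallelRows_iff hp hq).2 hpq).symm⟩
  · rintro P Q S ⟨p, q, hp, hq, rfl, rfl, hpq⟩ hQS
    obtain ⟨s, hs, rfl, hqs⟩ := (par_span_iff hq).1 hQS
    exact (par_span_iff hp).2 ⟨s, hs, rfl, ((parallelRows_iff hp hq).2 hpq).trans hqs⟩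
  · rintro P ⟨p, ⟨c, d, hr⟩, rfl⟩
    exact card_par_class (r := (c, d)) hr

/-- On the projective line `P(R)` over a finite local ring `R`, the
relation `R(a,b) ∥ R(c,d) ⟺` the matrix with rows `(a,b)`, `(c,d)` is not invertible,
is an equivalence relation on `P(R)`, and each equivalence class has exactly `|I|`
elements, where `I` is the maximal ideal (= set of non-units) of `R`. -/
theorem par_equivalence_and_class_size {R : Type*} [Ring R] [IsLocalRing R] [Finite R] :
    (∀ P ∈ ProjLine R, Par R P P) ∧
    (∀ P Q, Par R P Q → Par R Q P) ∧
    (∀ P Q S, Par R P Q → Par R Q S → Par R P S) ∧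
    (∀ P ∈ ProjLine R,
      Nat.card {Q : ProjLine R // Par R P (Q : Submodule R (R × R))}
        = Nat.card {x : R // ¬ IsUnit x}) :=
  par_equivalence_and_class_size_general
end

section
/- Let σ ≠ id and ω the map of P(R) induced by conjugation with u = 1 + bε (b ∈ K), R = K(ε;σ). Then ω maps R(x₁ + x₂ε, 1) to R(x₁ + (x₂ + b(x₁ − σ(x₁)))ε, 1) and fixes every point R(1,z) with z ∈ I. In particular ω maps each point to a parallel point, and fixes R(x,1) with x ∈ K exactly when x ∈ Fix(σ). -/
/-!
Modulo the maximal ideal `I = Kε` the ring `R = K(ε;σ)` is the field `K`, where conjugation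
is trivial; the explicit product `(1 - bε)(x₁ + x₂ε)(1 + bε) = x₁ + (x₂ + b(x₁ - σ x₁))ε`
shows how `ω` moves a point inside its residue class. A matrix over `R` whose rows agree
modulo `I` maps to a singular matrix over `K`, so it is not invertible: this gives the
parallelism. Finally `R(x, 1)` determines `x`, so `R(x, 1)` is fixed iff `b(x - σ x) = 0`.
-/

section ProjectiveLine

variable {R : Type*} [Ring R]

lemma isRep_mk_one (x : R) : IsRep R (x, 1) := by
  refine ⟨1, 0, ⟨⟨!![x, 1; 1, 0], !![0, 1; 1, -x], ?_, ?_⟩, rfl⟩⟩ <;>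
    ext i j <;> fin_cases i <;> fin_cases j <;> simp [Matrix.mul_apply, Fin.sum_univ_two]

lemma isRep_one_mk (z : R) : IsRep R (1, z) := by
  refine ⟨0, 1, ⟨⟨!![1, z; 0, 1], !![1, -z; 0, 1], ?_, ?_⟩, rfl⟩⟩ <;>
    ext i j <;> fin_cases i <;> fin_cases j <;> simp [Matrix.mul_apply, Fin.sum_univ_two]

lemma span_singleton_mk_one_eq_iff {x y : R} :
    Submodule.span R {(x, (1 : R))} = Submodule.span R {(y, 1)} ↔ x = y := by
  refine ⟨fun h => ?_, fun h => h ▸ rfl⟩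
  have hx : (x, (1 : R)) ∈ Submodule.span R {(y, 1)} := h ▸ Submodule.mem_span_singleton_self _
  obtain ⟨r, hr⟩ := Submodule.mem_span_singleton.mp hx
  simp only [Prod.smul_mk, smul_eq_mul, mul_one, Prod.mk.injEq] at hr
  rw [← hr.1, hr.2, one_mul]

variable {S : Type*} [CommRing S] [Nontrivial S]

lemma not_isUnit_of_map_rows_eq (f : R →+* S) {p q : R × R}
    (h₁ : f p.1 = f q.1) (h₂ : f p.2 = f q.2) :
    ¬ IsUnit (!![p.1, p.2; q.1, q.2] : Matrix (Fin 2) (Fin 2) R) := by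
  intro hM
  have hdet := (Matrix.isUnit_iff_isUnit_det _).mp (hM.map f.mapMatrix)
  have hmap : f.mapMatrix !![p.1, p.2; q.1, q.2] = !![f q.1, f q.2; f q.1, f q.2] := by
    ext i j; fin_cases i <;> fin_cases j <;> simp [h₁, h₂]
  rw [hmap, Matrix.det_fin_two_of, mul_comm, sub_self] at hdet
  exact not_isUnit_zero hdet

lemma par_of_map_eq (f : R →+* S) {p q : R × R} (hp : IsRep R p) (hq : IsRep R q)
    (h₁ : f p.1 = f q.1) (h₂ : f p.2 = f q.2) :
    Par R (Submodule.span R {p}) (Submodule.span R {q}) :=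
  ⟨p, q, hp, hq, rfl, rfl, not_isUnit_of_map_rows_eq f h₁ h₂⟩

end ProjectiveLine

namespace TDN

variable {K : Type*} [Field K] {σ : K →+* K}

variable (K σ) in
/-- The residue map `R → R/I ≅ K`. -/
def fstHom : TDN K σ →+* K where
  toFun x := x.a
  map_one' := rfl
  map_mul' _ _ := rfl
  map_zero' := rfl
  map_add' _ _ := rfl

@[simp] lemma fstHom_apply (x : TDN K σ) : fstHom K σ x = x.a := rfl

lemma isUnit_iff_a_ne_zero {z : TDN K σ} : IsUnit z ↔ z.a ≠ 0 := by
  refine ⟨fun hz => by simpa using (hz.map (fstHom K σ)).ne_zero, fun hz => ?_⟩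
  have hσz : σ z.a ≠ 0 := map_ne_zero σ |>.mpr hz
  refine isUnit_iff_exists.mpr ⟨⟨z.a⁻¹, -(z.a⁻¹ * z.b * σ z.a⁻¹)⟩, ?_, ?_⟩ <;>
    ext <;> simp [map_inv₀] <;> field_simp <;> ring

lemma coe_inv_of_coe_eq_mk_one {u : (TDN K σ)ˣ} {b : K} (hu : (u : TDN K σ) = ⟨1, b⟩) :
    ((u⁻¹ : (TDN K σ)ˣ) : TDN K σ) = ⟨1, -b⟩ :=
  Units.inv_eq_of_mul_eq_one_right (by ext <;> simp [hu])

lemma coe_inv_mul_mul_coe_of_coe_eq_mk_one {u : (TDN K σ)ˣ} {b : K} (hu : (u : TDN K σ) = ⟨1, b⟩)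
    (x : TDN K σ) :
    ((u⁻¹ : (TDN K σ)ˣ) : TDN K σ) * x * u = ⟨x.a, x.b + b * (x.a - σ x.a)⟩ := by
  rw [coe_inv_of_coe_eq_mk_one hu, hu]
  ext <;> simp; ring

end TDN

open TDN in
theorem conj_action_on_projLine_general {K : Type*} [Field K] (σ : K →+* K)
    (b : K) (u : (TDN K σ)ˣ) (hu : (u : TDN K σ) = ⟨1, b⟩) :
    (∀ x₁ x₂ : K,
      ((u⁻¹ : (TDN K σ)ˣ) : TDN K σ) * ⟨x₁, x₂⟩ * (u : TDN K σ)
        = ⟨x₁, x₂ + b * (x₁ - σ x₁)⟩) ∧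
    (∀ z : TDN K σ, ¬ IsUnit z →
      ((u⁻¹ : (TDN K σ)ˣ) : TDN K σ) * z * (u : TDN K σ) = z) ∧
    (∀ x : TDN K σ,
      Par (TDN K σ)
        (Submodule.span (TDN K σ) {(((u⁻¹ : (TDN K σ)ˣ) : TDN K σ) * x * (u : TDN K σ), (1 : TDN K σ))})
        (Submodule.span (TDN K σ) {(x, (1 : TDN K σ))})) ∧
    (∀ z : TDN K σ, ¬ IsUnit z →
      Par (TDN K σ)
        (Submodule.span (TDN K σ) {((1 : TDN K σ), ((u⁻¹ : (TDN K σ)ˣ) : TDN K σ) * z * (u : TDN K σ))})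
        (Submodule.span (TDN K σ) {((1 : TDN K σ), z)})) ∧
    (b ≠ 0 → ∀ x : K,
      (Submodule.span (TDN K σ)
          {(((u⁻¹ : (TDN K σ)ˣ) : TDN K σ) * ⟨x, 0⟩ * (u : TDN K σ), (1 : TDN K σ))}
        = Submodule.span (TDN K σ) {((⟨x, 0⟩ : TDN K σ), (1 : TDN K σ))}
        ↔ σ x = x)) := by
  have hconj := coe_inv_mul_mul_coe_of_coe_eq_mk_one hu
  have hconj_a (x : TDN K σ) : (((u⁻¹ : (TDN K σ)ˣ) : TDN K σ) * x * u).a = x.a := by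
    rw [hconj]
  refine ⟨fun x₁ x₂ => hconj ⟨x₁, x₂⟩, fun z hz => ?_, fun x => ?_, fun z _ => ?_, fun hb x => ?_⟩
  · have hza : z.a = 0 := by simpa [isUnit_iff_a_ne_zero] using hz
    rw [hconj]
    ext <;> simp [hza]
  · exact par_of_map_eq (fstHom K σ) (isRep_mk_one _) (isRep_mk_one _) (hconj_a x) rfl
  · exact par_of_map_eq (fstHom K σ) (isRep_one_mk _) (isRep_one_mk _) rfl (hconj_a z)
  · rw [span_singleton_mk_one_eq_iff, hconj, TDN.ext_iff]
    simpa [hb, sub_eq_zero] using eq_comm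

/-- Let `σ ≠ id` and `ω` the map of `P(R)` induced by conjugation with
the unit `u = 1 + bε` (`b ∈ K`), `R = K(ε;σ)`. Then `ω` maps `R(x₁ + x₂ε, 1)` to
`R(x₁ + (x₂ + b(x₁ − σ(x₁)))ε, 1)` and fixes every point `R(1,z)` with `z ∈ I`.
In particular `ω` maps each point to a parallel point, and (for `b ≠ 0`) it fixes
`R(x,1)` with `x ∈ K` exactly when `x ∈ Fix(σ)`. -/
theorem conj_action_on_projLine {K : Type*} [Field K] (σ : K →+* K)
    (hσ : Function.Injective σ) (hne : σ ≠ RingHom.id K)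
    (b : K) (u : (TDN K σ)ˣ) (hu : (u : TDN K σ) = ⟨1, b⟩) :
    (∀ x₁ x₂ : K,
      ((u⁻¹ : (TDN K σ)ˣ) : TDN K σ) * ⟨x₁, x₂⟩ * (u : TDN K σ)
        = ⟨x₁, x₂ + b * (x₁ - σ x₁)⟩) ∧
    (∀ z : TDN K σ, ¬ IsUnit z →
      ((u⁻¹ : (TDN K σ)ˣ) : TDN K σ) * z * (u : TDN K σ) = z) ∧
    (∀ x : TDN K σ,
      Par (TDN K σ)
        (Submodule.span (TDN K σ) {(((u⁻¹ : (TDN K σ)ˣ) : TDN K σ) * x * (u : TDN K σ), (1 : TDN K σ))})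
        (Submodule.span (TDN K σ) {(x, (1 : TDN K σ))})) ∧
    (∀ z : TDN K σ, ¬ IsUnit z →
      Par (TDN K σ)
        (Submodule.span (TDN K σ) {((1 : TDN K σ), ((u⁻¹ : (TDN K σ)ˣ) : TDN K σ) * z * (u : TDN K σ))})
        (Submodule.span (TDN K σ) {((1 : TDN K σ), z)})) ∧
    (b ≠ 0 → ∀ x : K,
      (Submodule.span (TDN K σ)
          {(((u⁻¹ : (TDN K σ)ˣ) : TDN K σ) * ⟨x, 0⟩ * (u : TDN K σ), (1 : TDN K σ))}
        = Submodule.span (TDN K σ) {((⟨x, 0⟩ : TDN K σ), (1 : TDN K σ))}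
        ↔ σ x = x)) :=
  conj_action_on_projLine_general σ b u hu
end

section
/- Let σ ≠ id, K = GF(q), R = K(ε;σ), and fix x₁ ∈ K with σ(x₁) ≠ x₁. Then the group U = {1 + bε : b ∈ K} acts (via conjugation) regularly on the parallel class {R(x₁ + x₂ε, 1) : x₂ ∈ K} of the point R(x₁,1): for each x₂ ∈ K there is a unique b ∈ K with x₂ = b(x₁ − σ(x₁)). -/
namespace TDN

variable {K : Type*} [Field K] {σ : K →+* K}

/-- `⟨1, -b⟩ = 1 - bε` is the inverse of `1 + bε = ⟨1, b⟩`, so this is conjugation by `1 + bε`. -/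
lemma conj_one_add_mul_eps (b x : K) :
    (⟨1, -b⟩ : TDN K σ) * ⟨x, 0⟩ * ⟨1, b⟩ = ⟨x, b * (x - σ x)⟩ := by
  ext
  · simp
  · simp only [mul_a, mul_b, map_one]
    ring

lemma conj_one_add_mul_eps_eq_iff (b x y : K) :
    (⟨1, -b⟩ : TDN K σ) * ⟨x, 0⟩ * ⟨1, b⟩ = ⟨x, y⟩ ↔ y = b * (x - σ x) := by
  rw [conj_one_add_mul_eps, mk.injEq, eq_comm (b := y)]
  exact and_iff_right rfl

end TDN

lemma existsUnique_eq_mul_of_ne_zero {K : Type*} [DivisionRing K] (y : K) {d : K} (hd : d ≠ 0) :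
    ∃! b : K, y = b * d :=
  ⟨y / d, (div_mul_cancel₀ y hd).symm, fun b hb => by rw [hb, mul_div_cancel_right₀ b hd]⟩

theorem U_regular_on_parallel_class_general {K : Type*} [Field K] (σ : K ≃+* K)
    (x₁ : K) (hx₁ : σ x₁ ≠ x₁) :
    ∀ x₂ : K,
      (∃! b : K,
        (⟨1, -b⟩ : TDN K (σ : K →+* K)) * ⟨x₁, 0⟩ * ⟨1, b⟩ = ⟨x₁, x₂⟩) ∧
      (∃! b : K, x₂ = b * (x₁ - σ x₁)) := by
  intro x₂
  have hunique : ∃! b : K, x₂ = b * (x₁ - σ x₁) :=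
    existsUnique_eq_mul_of_ne_zero x₂ (sub_ne_zero.mpr hx₁.symm)
  refine ⟨?_, hunique⟩
  simpa only [TDN.conj_one_add_mul_eps_eq_iff, RingEquiv.coe_toRingHom] using hunique

/-- Let `σ ≠ id`, `K = GF(q)`, `R = K(ε;σ)`, and fix `x₁ ∈ K` with
`σ(x₁) ≠ x₁`. Then the group `U = {1 + bε : b ∈ K}` acts via conjugation regularly on
the parallel class `{R(x₁ + x₂ε, 1) : x₂ ∈ K}` of `R(x₁,1)`: for each `x₂ ∈ K` there
is a unique `b ∈ K` with `(1+bε)⁻¹ (x₁) (1+bε) = x₁ + x₂ε`, equivalently a unique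
`b ∈ K` with `x₂ = b(x₁ − σ(x₁))`.  (Note `(1+bε)⁻¹ = 1 − bε`.) -/
theorem U_regular_on_parallel_class {K : Type*} [Field K] [Fintype K] (σ : K ≃+* K)
    (hne : σ ≠ RingEquiv.refl K) (x₁ : K) (hx₁ : σ x₁ ≠ x₁) :
    ∀ x₂ : K,
      (∃! b : K,
        (⟨1, -b⟩ : TDN K (σ : K →+* K)) * ⟨x₁, 0⟩ * ⟨1, b⟩ = ⟨x₁, x₂⟩) ∧
      (∃! b : K, x₂ = b * (x₁ - σ x₁)) :=
  U_regular_on_parallel_class_general σ x₁ hx₁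
end

section
/- Let K = GF(q) with σ ∈ Aut(K), σ ≠ id. The point set B₀ = {K·(a, 0, 0, σ(a), a·σ(a), 1) : a ∈ K} ∪ {K·(0,0,0,0,1,0)} in PG(5,K) is a cap (no three of its points are collinear) and spans the 3-dimensional projective subspace given by x₂ = 0 = x₃. -/
/-!
In the coordinates `x₁, x₄, x₅, x₆` (indices `0, 3, 4, 5` of `Fin 6`) the points of `B₀` are
`(a, σ a, a σ a, 1)` and `(0, 0, 1, 0)`: the Segre images of the pairs `(a, σ a)` and `(∞, ∞)` of
`PG(1, K) × PG(1, K)`. Since `σ` is injective, three such pairs differ in both components, and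
eliminating on these four coordinates shows three of the vectors are independent. For the span,
`(0,0,0,0,1,0)` and the vector at `a = 0` are two of the unit vectors, and the vectors at `a = 1`
and at any `c` with `σ c ≠ c` then produce the other two.
-/

open Function Module Submodule Set

theorem LinearIndependent.triple_iff {R M : Type*} [Ring R] [AddCommGroup M] [Module R M]
    {u v w : M} :
    LinearIndependent R ![u, v, w] ↔
      ∀ a b c : R, a • u + b • v + c • w = 0 → a = 0 ∧ b = 0 ∧ c = 0 := by
  simp only [Fintype.linearIndependent_iff, Fin.sum_univ_three]
  refine ⟨fun h a b c habc => ?_, fun h g hg i => ?_⟩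
  · have := h ![a, b, c] habc
    exact ⟨this 0, this 1, this 2⟩
  · obtain ⟨h0, h1, h2⟩ := h _ _ _ hg
    fin_cases i <;> assumption

theorem LinearIndependent.of_span_singleton_eq {ι R M : Type*} [Ring R] [IsDomain R]
    [AddCommGroup M] [Module R M] [Module.IsTorsionFree R M] {v w : ι → M}
    (hw : LinearIndependent R w) (h : ∀ i, R ∙ v i = R ∙ w i) : LinearIndependent R v := by
  choose u hu using fun i => span_singleton_eq_span_singleton.mp (h i).symm
  rw [show v = u • w from funext fun i => (hu i).symm]
  exact hw.units_smul u

theorem Submodule.le_of_single_one_mem {ι K : Type*} [Fintype ι] [DecidableEq ι] [Semiring K]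
    {W S : Submodule K (ι → K)}
    (h : ∀ w ∈ W, ∀ i, w i ≠ 0 → Pi.single i 1 ∈ S) : W ≤ S := by
  intro w hw
  rw [pi_eq_sum_univ' w]
  refine sum_mem fun i _ => ?_
  by_cases hi : w i = 0
  · simp [hi]
  · exact smul_mem _ _ (h w hw i hi)

namespace BaseBlock

variable {K : Type*} [Field K]

def curveVec (f : K → K) (a : K) : Fin 6 → K := ![a, 0, 0, f a, a * f a, 1]

def infVec : Fin 6 → K := ![0, 0, 0, 0, 1, 0]

def baseVec (f : K → K) : Option K → Fin 6 → K
  | none => infVec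
  | some a => curveVec f a

theorem eq_zero_of_smul_curveVec_add_eq_zero {f : K → K} (hf : Injective f) {a b c α β γ : K}
    (hab : a ≠ b) (hac : a ≠ c) (hbc : b ≠ c)
    (h : α • curveVec f a + β • curveVec f b + γ • curveVec f c = 0) :
    α = 0 ∧ β = 0 ∧ γ = 0 := by
  have h0 : α * a + β * b + γ * c = 0 := by simpa [curveVec] using congrFun h 0
  have h3 : α * f a + β * f b + γ * f c = 0 := by simpa [curveVec] using congrFun h 3
  have h4 : α * (a * f a) + β * (b * f b) + γ * (c * f c) = 0 := by
    simpa [curveVec] using congrFun h 4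
  have h5 : α + β + γ = 0 := by simpa [curveVec] using congrFun h 5
  have hfab : f a - f b ≠ 0 := sub_ne_zero.mpr (hf.ne hab)
  -- The functional `x₅ - f b x₁ - c x₄ + c f b x₆` takes the value `(t - c)(f t - f b)` at
  -- `curveVec f t`, so it kills `curveVec f b` and `curveVec f c`; symmetrically for `β`.
  have hα : α = 0 := by
    have : α * ((a - c) * (f a - f b)) = 0 := by
      linear_combination h4 - f b * h0 - c * h3 + c * f b * h5
    simpa [sub_ne_zero.mpr hac, hfab] using this
  have hβ : β = 0 := by
    have : β * ((b - c) * (f a - f b)) = 0 := by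
      linear_combination -(h4 - f a * h0 - c * h3 + c * f a * h5)
    simpa [sub_ne_zero.mpr hbc, hfab] using this
  exact ⟨hα, hβ, by linear_combination h5 - hα - hβ⟩

theorem eq_zero_of_smul_curveVec_add_smul_infVec_eq_zero {f : K → K} {a b α β γ : K}
    (hab : a ≠ b) (h : α • curveVec f a + β • curveVec f b + γ • infVec = 0) :
    α = 0 ∧ β = 0 ∧ γ = 0 := by
  have h0 : α * a + β * b = 0 := by simpa [curveVec, infVec] using congrFun h 0
  have h4 : α * (a * f a) + β * (b * f b) + γ = 0 := by
    simpa [curveVec, infVec] using congrFun h 4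
  have h5 : α + β = 0 := by simpa [curveVec, infVec] using congrFun h 5
  have hα : α = 0 := by
    have : α * (a - b) = 0 := by linear_combination h0 - b * h5
    simpa [sub_ne_zero.mpr hab] using this
  have hβ : β = 0 := by linear_combination h5 - hα
  exact ⟨hα, hβ, by linear_combination h4 - a * f a * hα - b * f b * hβ⟩

theorem linearIndependent_baseVec {f : K → K} (hf : Injective f) {x y z : Option K}
    (hxy : x ≠ y) (hxz : x ≠ z) (hyz : y ≠ z) :
    LinearIndependent K ![baseVec f x, baseVec f y, baseVec f z] := by
  rw [LinearIndependent.triple_iff]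
  intro α β γ h
  match x, y, z with
  | some a, some b, some c =>
    exact eq_zero_of_smul_curveVec_add_eq_zero hf (by simpa using hxy) (by simpa using hxz)
      (by simpa using hyz) h
  | none, some b, some c =>
    obtain ⟨hβ, hγ, hα⟩ := eq_zero_of_smul_curveVec_add_smul_infVec_eq_zero (f := f)
      (α := β) (β := γ) (γ := α) (by simpa using hyz) (by rw [← h]; simp only [baseVec]; abel)
    exact ⟨hα, hβ, hγ⟩
  | some a, none, some c =>
    obtain ⟨hα, hγ, hβ⟩ := eq_zero_of_smul_curveVec_add_smul_infVec_eq_zero (f := f)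
      (α := α) (β := γ) (γ := β) (by simpa using hxz) (by rw [← h]; simp only [baseVec]; abel)
    exact ⟨hα, hβ, hγ⟩
  | some a, some b, none =>
    exact eq_zero_of_smul_curveVec_add_smul_infVec_eq_zero (by simpa using hxy) h
  | none, none, _ => exact absurd rfl hxy
  | none, some _, none => exact absurd rfl hxz
  | some _, none, none => exact absurd rfl hyz

theorem baseVec_apply_one (f : K → K) (x : Option K) : baseVec f x 1 = 0 := by
  cases x <;> rfl

theorem baseVec_apply_two (f : K → K) (x : Option K) : baseVec f x 2 = 0 := by
  cases x <;> rfl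

section RingHomClass

variable {F : Type*} [FunLike F K K] [RingHomClass F K K]

theorem single_one_mem_span_baseVec (σ : F) {c : K} (hc : σ c ≠ c) {i : Fin 6} (hi1 : i ≠ 1)
    (hi2 : i ≠ 2) : Pi.single i 1 ∈ span K (range (baseVec σ)) := by
  have mem (x : Option K) : baseVec σ x ∈ span K (range (baseVec σ)) := subset_span ⟨x, rfl⟩
  have hd : σ c - c ≠ 0 := sub_ne_zero.mpr hc
  obtain rfl | rfl | rfl | rfl : i = 0 ∨ i = 3 ∨ i = 4 ∨ i = 5 := by omega
  · have : Pi.single 0 1 = (σ c - c)⁻¹ • (σ c • baseVec σ (some 1) - baseVec σ (some c) -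
        (σ c - c * σ c) • baseVec σ none - (σ c - 1) • baseVec σ (some 0)) := by
      ext j; fin_cases j <;> simp [baseVec, curveVec, infVec]
      field_simp
    rw [this]
    apply_rules [sub_mem, smul_mem]
  · have : Pi.single 3 1 = (σ c - c)⁻¹ • (baseVec σ (some c) - c • baseVec σ (some 1) -
        (c * σ c - c) • baseVec σ none - (1 - c) • baseVec σ (some 0)) := by
      ext j; fin_cases j <;> simp [baseVec, curveVec, infVec]
      field_simp
    rw [this]
    apply_rules [sub_mem, smul_mem]
  · convert mem none using 1
    ext j; fin_cases j <;> rfl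
  · convert mem (some 0) using 1
    ext j; fin_cases j <;> simp [baseVec, curveVec]

theorem span_range_baseVec_eq {σ : F} {c : K} (hc : σ c ≠ c) {W : Submodule K (Fin 6 → K)}
    (hW : ∀ w : Fin 6 → K, w ∈ W ↔ w 1 = 0 ∧ w 2 = 0) : span K (range (baseVec σ)) = W := by
  refine le_antisymm (span_le.mpr ?_) (le_of_single_one_mem fun w hw i hi => ?_)
  · rintro _ ⟨x, rfl⟩
    exact (hW _).mpr ⟨baseVec_apply_one σ x, baseVec_apply_two σ x⟩
  · obtain ⟨hw1, hw2⟩ := (hW w).mp hw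
    exact single_one_mem_span_baseVec σ hc (by rintro rfl; exact hi hw1)
      (by rintro rfl; exact hi hw2)

end RingHomClass

end BaseBlock

theorem finrank_eq_four_of_mem_iff {K : Type*} [Field K] {W : Submodule K (Fin 6 → K)}
    (hW : ∀ w : Fin 6 → K, w ∈ W ↔ w 1 = 0 ∧ w 2 = 0) : finrank K W = 4 := by
  have : W = ⨅ i ∈ ({1, 2} : Set (Fin 6)), LinearMap.ker (LinearMap.proj i) := by
    ext w; simp [hW]
  subst this
  rw [(LinearMap.iInfKerProjEquiv K (fun _ => K) (I := {1, 2}ᶜ) disjoint_compl_left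
    (compl_union_self _).ge).finrank_eq, finrank_fintype_fun_eq_card]
  decide

open BaseBlock in
theorem base_block_is_cap_spanning_solid_general {K : Type*} [Field K]
    (σ : K ≃+* K) (hne : σ ≠ RingEquiv.refl K)
    (B₀ : Set (Submodule K (Fin 6 → K)))
    (hB₀ : B₀ = {P | (∃ a : K, P = Submodule.span K {![a, 0, 0, σ a, a * σ a, 1]}) ∨
        P = Submodule.span K {![0, 0, 0, 0, 1, 0]}})
    (W : Submodule K (Fin 6 → K))
    (hW : ∀ w : Fin 6 → K, w ∈ W ↔ w 1 = 0 ∧ w 2 = 0) :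
    (∀ p ∈ B₀, ∀ q ∈ B₀, ∀ r ∈ B₀, p ≠ q → p ≠ r → q ≠ r →
      ∀ v₁ v₂ v₃ : Fin 6 → K,
        p = Submodule.span K {v₁} → q = Submodule.span K {v₂} →
        r = Submodule.span K {v₃} →
        LinearIndependent K ![v₁, v₂, v₃]) ∧
    sSup B₀ = W ∧ Module.finrank K W = 4 := by
  have hB : B₀ = range fun x => K ∙ baseVec σ x := by
    ext P
    simp [hB₀, Option.exists, baseVec, curveVec, infVec, or_comm, eq_comm]
  obtain ⟨c, hc⟩ : ∃ c, σ c ≠ c := by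
    by_contra! h
    exact hne (RingEquiv.ext h)
  refine ⟨?_, ?_, finrank_eq_four_of_mem_iff hW⟩
  · rw [hB]
    rintro _ ⟨x, rfl⟩ _ ⟨y, rfl⟩ _ ⟨z, rfl⟩ hxy hxz hyz v₁ v₂ v₃ h₁ h₂ h₃
    have hind := linearIndependent_baseVec σ.injective (x := x) (y := y) (z := z)
      (by rintro rfl; exact hxy rfl) (by rintro rfl; exact hxz rfl) (by rintro rfl; exact hyz rfl)
    refine hind.of_span_singleton_eq fun i => ?_
    fin_cases i
    exacts [h₁.symm, h₂.symm, h₃.symm]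
  · rw [hB, sSup_range, ← span_range_eq_iSup, span_range_baseVec_eq hc hW]

/-- Let `K = GF(q)`, `σ ∈ Aut(K)`, `σ ≠ id`. The point set
`B₀ = {K·(a, 0, 0, σ(a), a·σ(a), 1) : a ∈ K} ∪ {K·(0,0,0,0,1,0)}` in `PG(5,K)`
(points = one-dimensional subspaces of `K⁶`) is a cap (no three of its points are
collinear, i.e. any three distinct points have linearly independent representatives)
and spans the 3-dimensional projective subspace given by `x₂ = 0 = x₃` (coordinates
indexed `x₁,…,x₆`). -/
theorem base_block_is_cap_spanning_solid {K : Type*} [Field K] [Fintype K]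
    (σ : K ≃+* K) (hne : σ ≠ RingEquiv.refl K)
    (B₀ : Set (Submodule K (Fin 6 → K)))
    (hB₀ : B₀ = {P | (∃ a : K, P = Submodule.span K {![a, 0, 0, σ a, a * σ a, 1]}) ∨
        P = Submodule.span K {![0, 0, 0, 0, 1, 0]}})
    (W : Submodule K (Fin 6 → K))
    (hW : ∀ w : Fin 6 → K, w ∈ W ↔ w 1 = 0 ∧ w 2 = 0) :
    (∀ p ∈ B₀, ∀ q ∈ B₀, ∀ r ∈ B₀, p ≠ q → p ≠ r → q ≠ r →
      ∀ v₁ v₂ v₃ : Fin 6 → K,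
        p = Submodule.span K {v₁} → q = Submodule.span K {v₂} →
        r = Submodule.span K {v₃} →
        LinearIndependent K ![v₁, v₂, v₃]) ∧
    sSup B₀ = W ∧ Module.finrank K W = 4 :=
  base_block_is_cap_spanning_solid_general σ hne B₀ hB₀ W hW
end
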